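/- Let A, B, C, D be jointly distributed random variables on a finite probability space. If I(A:B) = 0 and I(A:B|C) = 0, then I(C:D) ≤ I(C:D|A) + I(C:D|B). -/
import Mathlib


open scoped BigOperators Classical
set_option linter.unusedSectionVars false
set_option linter.unusedVariables false

noncomputable section

/-- `p` is a probability mass function on the finite type `Ω`. -/
def IsPMF {Ω : Type*} [Fintype Ω] (p : Ω → ℝ) : Prop :=
  (∀ ω, 0 ≤ p ω) ∧ ∑ ω, p ω = 1

/-- Probability of the event `X = s` under `p`. -/
def prOf {Ω S : Type*} [Fintype Ω] [DecidableEq S] (p : Ω → ℝ) (X : Ω → S) (s : S) : ℝ :=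
  ∑ ω ∈ Finset.univ.filter (fun ω => X ω = s), p ω

/-- Shannon entropy (in bits) of the random variable `X` under the pmf `p`. -/
def ent {Ω S : Type*} [Fintype Ω] [Fintype S] [DecidableEq S] (p : Ω → ℝ) (X : Ω → S) : ℝ :=
  - ∑ s : S, prOf p X s * Real.logb 2 (prOf p X s)

/-- Mutual information `I(X:Y) = H(X) + H(Y) - H(X,Y)`. -/
def mi {Ω S T : Type*} [Fintype Ω] [Fintype S] [Fintype T] [DecidableEq S] [DecidableEq T]
    (p : Ω → ℝ) (X : Ω → S) (Y : Ω → T) : ℝ :=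
  ent p X + ent p Y - ent p (fun ω => (X ω, Y ω))

/-- Conditional mutual information `I(X:Y|Z) = H(X,Z) + H(Y,Z) - H(X,Y,Z) - H(Z)`. -/
def cmi {Ω S T U : Type*} [Fintype Ω] [Fintype S] [Fintype T] [Fintype U]
    [DecidableEq S] [DecidableEq T] [DecidableEq U]
    (p : Ω → ℝ) (X : Ω → S) (Y : Ω → T) (Z : Ω → U) : ℝ :=
  ent p (fun ω => (X ω, Z ω)) + ent p (fun ω => (Y ω, Z ω))
    - ent p (fun ω => (X ω, Y ω, Z ω)) - ent p Z

/-- Conditional entropy `H(X|Y) = H(X,Y) - H(Y)`. -/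
def condEnt {Ω S T : Type*} [Fintype Ω] [Fintype S] [Fintype T] [DecidableEq S] [DecidableEq T]
    (p : Ω → ℝ) (X : Ω → S) (Y : Ω → T) : ℝ :=
  ent p (fun ω => (X ω, Y ω)) - ent p Y

/-- The four coordinate random variables on `Bool × Bool × Bool × Bool`. -/
def vA : Bool × Bool × Bool × Bool → Bool := fun ω => ω.1
def vB : Bool × Bool × Bool × Bool → Bool := fun ω => ω.2.1
def vC : Bool × Bool × Bool × Bool → Bool := fun ω => ω.2.2.1
def vD : Bool × Bool × Bool × Bool → Bool := fun ω => ω.2.2.2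

namespace ZYaux

section helpers

variable {Ω : Type*} [Fintype Ω] (p : Ω → ℝ)

lemma sum_ge_single {S : Type*} [Fintype S] (f : S → ℝ) (h : ∀ s, 0 ≤ f s) (s : S) :
    f s ≤ ∑ t, f t :=
  Finset.single_le_sum (fun i _ => h i) (Finset.mem_univ s)

lemma prOf_nonneg (hp : ∀ ω, 0 ≤ p ω) {S : Type*} [DecidableEq S] (X : Ω → S) (s : S) :
    0 ≤ prOf p X s :=
  Finset.sum_nonneg fun ω _ => hp ω

lemma le_prOf (hp : ∀ ω, 0 ≤ p ω) {S : Type*} [DecidableEq S] (X : Ω → S) (ω : Ω) :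
    p ω ≤ prOf p X (X ω) :=
  Finset.single_le_sum (fun i _ => hp i) (by simp)

lemma group {S : Type*} [Fintype S] [DecidableEq S] (X : Ω → S) (F : S → ℝ) :
    ∑ s, prOf p X s * F s = ∑ ω, p ω * F (X ω) := by
  unfold prOf
  calc ∑ s, (∑ ω ∈ Finset.univ.filter (fun ω => X ω = s), p ω) * F s
      = ∑ s, ∑ ω ∈ Finset.univ.filter (fun ω => X ω = s), p ω * F (X ω) := by
        refine Finset.sum_congr rfl fun s _ => ?_
        rw [Finset.sum_mul]
        refine Finset.sum_congr rfl fun ω hω => ?_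
        rw [(Finset.mem_filter.mp hω).2]
    _ = ∑ ω, p ω * F (X ω) := Finset.sum_fiberwise _ _ _

lemma sum_prOf {S : Type*} [Fintype S] [DecidableEq S] (X : Ω → S) :
    ∑ s, prOf p X s = ∑ ω, p ω := by
  simpa using group p X (fun _ => 1)

lemma ent_omega {S : Type*} [Fintype S] [DecidableEq S] (X : Ω → S) :
    ent p X = - ∑ ω, p ω * Real.logb 2 (prOf p X (X ω)) := by
  rw [ent, group p X (fun s => Real.logb 2 (prOf p X s))]

lemma prOf_map {S T : Type*} [DecidableEq S] [DecidableEq T]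
    (X : Ω → S) (e : S → T) (he : Function.Injective e) (s : S) :
    prOf p (fun ω => e (X ω)) (e s) = prOf p X s := by
  unfold prOf
  congr 1
  ext ω
  simp [he.eq_iff]

lemma marg2_2 {S T : Type*} [DecidableEq S] [DecidableEq T] [Fintype T]
    (X : Ω → S) (Y : Ω → T) (s : S) :
    prOf p X s = ∑ t, prOf p (fun ω => (X ω, Y ω)) (s, t) := by
  simp only [prOf, Finset.sum_filter]
  rw [Finset.sum_comm]
  refine Finset.sum_congr rfl fun ω _ => ?_
  by_cases h : X ω = s
  · simp [h, Prod.ext_iff]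
  · simp [h, Prod.ext_iff]

lemma marg2_1 {S T : Type*} [DecidableEq S] [DecidableEq T] [Fintype S]
    (X : Ω → S) (Y : Ω → T) (t : T) :
    prOf p Y t = ∑ s, prOf p (fun ω => (X ω, Y ω)) (s, t) := by
  simp only [prOf, Finset.sum_filter]
  rw [Finset.sum_comm]
  refine Finset.sum_congr rfl fun ω _ => ?_
  by_cases h : Y ω = t
  · simp [h, Prod.ext_iff]
  · simp [h, Prod.ext_iff]

lemma marg3_1 {S T U : Type*} [DecidableEq S] [DecidableEq T] [DecidableEq U] [Fintype S]
    (X : Ω → S) (Y : Ω → T) (Z : Ω → U) (t : T) (u : U) :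
    prOf p (fun ω => (Y ω, Z ω)) (t, u)
      = ∑ s, prOf p (fun ω => (X ω, Y ω, Z ω)) (s, t, u) :=
  marg2_1 p X (fun ω => (Y ω, Z ω)) (t, u)

lemma marg3_2 {S T U : Type*} [DecidableEq S] [DecidableEq T] [DecidableEq U] [Fintype T]
    (X : Ω → S) (Y : Ω → T) (Z : Ω → U) (s : S) (u : U) :
    prOf p (fun ω => (X ω, Z ω)) (s, u)
      = ∑ t, prOf p (fun ω => (X ω, Y ω, Z ω)) (s, t, u) := by
  rw [marg2_2 p (fun ω => (X ω, Z ω)) Y (s, u)]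
  refine Finset.sum_congr rfl fun t _ => ?_
  have he : Function.Injective (fun x : (S × U) × T => (x.1.1, x.2, x.1.2)) := by
    intro a b h
    simp only [Prod.ext_iff] at h ⊢
    exact ⟨⟨h.1, h.2.2⟩, h.2.1⟩
  exact (prOf_map p (fun ω => ((X ω, Z ω), Y ω)) _ he ((s, u), t)).symm

lemma marg3_3 {S T U : Type*} [DecidableEq S] [DecidableEq T] [DecidableEq U] [Fintype U]
    (X : Ω → S) (Y : Ω → T) (Z : Ω → U) (s : S) (t : T) :
    prOf p (fun ω => (X ω, Y ω)) (s, t)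
      = ∑ u, prOf p (fun ω => (X ω, Y ω, Z ω)) (s, t, u) := by
  rw [marg2_2 p (fun ω => (X ω, Y ω)) Z (s, t)]
  refine Finset.sum_congr rfl fun u _ => ?_
  have he : Function.Injective (fun x : (S × T) × U => (x.1.1, x.1.2, x.2)) := by
    intro a b h
    simp only [Prod.ext_iff] at h ⊢
    exact ⟨⟨h.1, h.2.1⟩, h.2.2⟩
  exact (prOf_map p (fun ω => ((X ω, Y ω), Z ω)) _ he ((s, t), u)).symm

lemma prOf_swap {S T : Type*} [DecidableEq S] [DecidableEq T]
    (X : Ω → S) (Y : Ω → T) (s : S) (t : T) :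
    prOf p (fun ω => (Y ω, X ω)) (t, s) = prOf p (fun ω => (X ω, Y ω)) (s, t) := by
  have he : Function.Injective (fun x : S × T => (x.2, x.1)) := by
    intro a b h
    simp only [Prod.ext_iff] at h ⊢
    exact ⟨h.2, h.1⟩
  exact prOf_map p (fun ω => (X ω, Y ω)) _ he (s, t)

lemma prOf_pair_le_left {S T : Type*} [DecidableEq S] [DecidableEq T] [Fintype T]
    (hp : ∀ ω, 0 ≤ p ω) (X : Ω → S) (Y : Ω → T) (s : S) (t : T) :
    prOf p (fun ω => (X ω, Y ω)) (s, t) ≤ prOf p X s := by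
  rw [marg2_2 p X Y s]
  exact Finset.single_le_sum (f := fun t => prOf p (fun ω => (X ω, Y ω)) (s, t))
    (fun i _ => prOf_nonneg p hp _ _) (Finset.mem_univ t)

lemma prOf_pair_le_right {S T : Type*} [DecidableEq S] [DecidableEq T] [Fintype S]
    (hp : ∀ ω, 0 ≤ p ω) (X : Ω → S) (Y : Ω → T) (s : S) (t : T) :
    prOf p (fun ω => (X ω, Y ω)) (s, t) ≤ prOf p Y t := by
  rw [marg2_1 p X Y t]
  exact Finset.single_le_sum (f := fun s => prOf p (fun ω => (X ω, Y ω)) (s, t))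
    (fun i _ => prOf_nonneg p hp _ _) (Finset.mem_univ s)

lemma prOf3_le_13 {S T U : Type*} [DecidableEq S] [DecidableEq T] [DecidableEq U] [Fintype T]
    (hp : ∀ ω, 0 ≤ p ω) (X : Ω → S) (Y : Ω → T) (Z : Ω → U) (s : S) (t : T) (u : U) :
    prOf p (fun ω => (X ω, Y ω, Z ω)) (s, t, u) ≤ prOf p (fun ω => (X ω, Z ω)) (s, u) := by
  rw [marg3_2 p X Y Z s u]
  exact Finset.single_le_sum (f := fun t => prOf p (fun ω => (X ω, Y ω, Z ω)) (s, t, u))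
    (fun i _ => prOf_nonneg p hp _ _) (Finset.mem_univ t)

lemma prOf3_le_23 {S T U : Type*} [DecidableEq S] [DecidableEq T] [DecidableEq U] [Fintype S]
    (hp : ∀ ω, 0 ≤ p ω) (X : Ω → S) (Y : Ω → T) (Z : Ω → U) (s : S) (t : T) (u : U) :
    prOf p (fun ω => (X ω, Y ω, Z ω)) (s, t, u) ≤ prOf p (fun ω => (Y ω, Z ω)) (t, u) := by
  rw [marg3_1 p X Y Z t u]
  exact Finset.single_le_sum (f := fun s => prOf p (fun ω => (X ω, Y ω, Z ω)) (s, t, u))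
    (fun i _ => prOf_nonneg p hp _ _) (Finset.mem_univ s)

lemma prOf3_le_12 {S T U : Type*} [DecidableEq S] [DecidableEq T] [DecidableEq U] [Fintype U]
    (hp : ∀ ω, 0 ≤ p ω) (X : Ω → S) (Y : Ω → T) (Z : Ω → U) (s : S) (t : T) (u : U) :
    prOf p (fun ω => (X ω, Y ω, Z ω)) (s, t, u) ≤ prOf p (fun ω => (X ω, Y ω)) (s, t) := by
  rw [marg3_3 p X Y Z s t]
  exact Finset.single_le_sum (f := fun u => prOf p (fun ω => (X ω, Y ω, Z ω)) (s, t, u))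
    (fun i _ => prOf_nonneg p hp _ _) (Finset.mem_univ u)

end helpers

lemma sum4_reorder {A B C D : Type*} [Fintype A] [Fintype B] [Fintype C] [Fintype D]
    (f : A → B → C → D → ℝ) :
    ∑ c, ∑ d, ∑ a, ∑ b, f c d a b = ∑ a, ∑ b, ∑ c, ∑ d, f c d a b :=
  calc ∑ c, ∑ d, ∑ a, ∑ b, f c d a b
      = ∑ c, ∑ a, ∑ d, ∑ b, f c d a b :=
        Finset.sum_congr rfl fun c _ => Finset.sum_comm
    _ = ∑ a, ∑ c, ∑ d, ∑ b, f c d a b := Finset.sum_comm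
    _ = ∑ a, ∑ c, ∑ b, ∑ d, f c d a b :=
        Finset.sum_congr rfl fun a _ => Finset.sum_congr rfl fun c _ => Finset.sum_comm
    _ = ∑ a, ∑ b, ∑ c, ∑ d, f c d a b :=
        Finset.sum_congr rfl fun a _ => Finset.sum_comm

lemma sum3_reorder {A B D : Type*} [Fintype A] [Fintype B] [Fintype D]
    (f : A → B → D → ℝ) :
    ∑ a, ∑ b, ∑ d, f a b d = ∑ d, ∑ a, ∑ b, f a b d :=
  calc ∑ a, ∑ b, ∑ d, f a b d
      = ∑ a, ∑ d, ∑ b, f a b d := Finset.sum_congr rfl fun a _ => Finset.sum_comm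
    _ = ∑ d, ∑ a, ∑ b, f a b d := Finset.sum_comm

lemma gibbs_le {ι : Type*} [Fintype ι] (r u : ι → ℝ)
    (hr : ∀ i, 0 ≤ r i) (hu0 : ∀ i, 0 ≤ u i) (hu : ∀ i, r i ≠ 0 → 0 < u i)
    (hsum : ∑ i, u i ≤ ∑ i, r i) :
    ∑ i, r i * Real.logb 2 (u i / r i) ≤ 0 := by
  have h2 : (0:ℝ) < Real.log 2 := Real.log_pos one_lt_two
  have key : ∀ i, r i * Real.logb 2 (u i / r i) ≤ (u i - r i) / Real.log 2 := by
    intro i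
    rcases eq_or_ne (r i) 0 with h | h
    · rw [h, zero_mul, sub_zero]
      exact div_nonneg (hu0 i) (le_of_lt h2)
    · have hri : 0 < r i := (hr i).lt_of_ne (Ne.symm h)
      have hui := hu i h
      have hlog : Real.log (u i / r i) ≤ u i / r i - 1 :=
        Real.log_le_sub_one_of_pos (by positivity)
      rw [Real.logb]
      rw [mul_div_assoc', div_le_div_iff_of_pos_right h2]
      calc r i * Real.log (u i / r i) ≤ r i * (u i / r i - 1) := by
            exact mul_le_mul_of_nonneg_left hlog (le_of_lt hri)
        _ = u i - r i := by field_simp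
  calc ∑ i, r i * Real.logb 2 (u i / r i) ≤ ∑ i, (u i - r i) / Real.log 2 :=
        Finset.sum_le_sum fun i _ => key i
    _ = (∑ i, u i - ∑ i, r i) / Real.log 2 := by
        rw [← Finset.sum_div, Finset.sum_sub_distrib]
    _ ≤ 0 := by
        apply div_nonpos_of_nonpos_of_nonneg
        · linarith
        · exact le_of_lt h2

lemma gibbs_eq {ι : Type*} [Fintype ι] (r u : ι → ℝ)
    (hr : ∀ i, 0 ≤ r i) (hu0 : ∀ i, 0 ≤ u i) (hu : ∀ i, r i ≠ 0 → 0 < u i)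
    (hsr : ∑ i, r i = 1) (hsu : ∑ i, u i ≤ 1)
    (hI : ∑ i, r i * Real.logb 2 (r i / u i) ≤ 0) :
    ∀ i, r i = u i := by
  have h2 : (0:ℝ) < Real.log 2 := Real.log_pos one_lt_two
  set t : ι → ℝ := fun i => r i * Real.log (r i / u i) - (r i - u i) with ht
  have ht0 : ∀ i, 0 ≤ t i := by
    intro i
    rcases eq_or_ne (r i) 0 with h | h
    · simp only [ht, h, zero_mul, zero_sub, sub_zero, neg_sub, sub_zero]
      simpa using hu0 i
    · have hri : 0 < r i := (hr i).lt_of_ne (Ne.symm h)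
      have hui := hu i h
      have hlog : Real.log (u i / r i) ≤ u i / r i - 1 :=
        Real.log_le_sub_one_of_pos (by positivity)
      have hrev : Real.log (r i / u i) = - Real.log (u i / r i) := by
        rw [Real.log_div (ne_of_gt hri) (ne_of_gt hui),
            Real.log_div (ne_of_gt hui) (ne_of_gt hri)]
        ring
      simp only [ht, hrev]
      have : r i * (u i / r i - 1) = u i - r i := by field_simp
      nlinarith [mul_le_mul_of_nonneg_left hlog (le_of_lt hri)]
  have hlogsum : ∑ i, r i * Real.log (r i / u i) ≤ 0 := by
    have : ∑ i, r i * Real.log (r i / u i)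
        = Real.log 2 * ∑ i, r i * Real.logb 2 (r i / u i) := by
      rw [Finset.mul_sum]
      refine Finset.sum_congr rfl fun i _ => ?_
      rw [Real.logb]
      field_simp
    rw [this]
    exact mul_nonpos_of_nonneg_of_nonpos (le_of_lt h2) hI
  have htsum : ∑ i, t i ≤ 0 := by
    have : ∑ i, t i = (∑ i, r i * Real.log (r i / u i)) - ((∑ i, r i) - ∑ i, u i) := by
      simp only [ht]
      rw [← Finset.sum_sub_distrib, ← Finset.sum_sub_distrib]
    rw [this, hsr]
    linarith
  have hall : ∀ i ∈ Finset.univ, t i = 0 := by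
    rw [← Finset.sum_eq_zero_iff_of_nonneg (fun i _ => ht0 i)]
    exact le_antisymm htsum (Finset.sum_nonneg fun i _ => ht0 i)
  intro i
  have hti := hall i (Finset.mem_univ i)
  rcases eq_or_ne (r i) 0 with h | h
  · simp only [ht, h, zero_mul, zero_sub, sub_zero, neg_sub, sub_zero] at hti
    linarith [hu0 i]
  · have hri : 0 < r i := (hr i).lt_of_ne (Ne.symm h)
    have hui := hu i h
    by_contra hne
    have hne1 : u i / r i ≠ 1 := by
      intro hx
      apply hne
      field_simp at hx
      linarith
    have hlog : Real.log (u i / r i) < u i / r i - 1 :=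
      Real.log_lt_sub_one_of_pos (by positivity) hne1
    have hrev : Real.log (r i / u i) = - Real.log (u i / r i) := by
      rw [Real.log_div (ne_of_gt hri) (ne_of_gt hui),
          Real.log_div (ne_of_gt hui) (ne_of_gt hri)]
      ring
    simp only [ht, hrev] at hti
    have : r i * (u i / r i - 1) = u i - r i := by field_simp
    nlinarith [mul_lt_mul_of_pos_left hlog hri]

section main

variable {Ω α β γ δ : Type*} [Fintype Ω] [Fintype α] [Fintype β] [Fintype γ] [Fintype δ]
    [DecidableEq α] [DecidableEq β] [DecidableEq γ] [DecidableEq δ]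

/-- `q(c,d) = ∑_a p(c,a) p(d,a) / p(a)`. -/
def Qf (p : Ω → ℝ) (C : Ω → γ) (D : Ω → δ) (A : Ω → α) (c : γ) (d : δ) : ℝ :=
  ∑ a, prOf p (fun ω => (C ω, A ω)) (c, a) * prOf p (fun ω => (D ω, A ω)) (d, a) / prOf p A a

/-- `u1(c,d,a) = p(c,a) p(d,a) p(c,d) / (p(a) q(c,d))`. -/
def U1 (p : Ω → ℝ) (C : Ω → γ) (D : Ω → δ) (A : Ω → α) (x : γ × δ × α) : ℝ :=
  prOf p (fun ω => (C ω, A ω)) (x.1, x.2.2) * prOf p (fun ω => (D ω, A ω)) (x.2.1, x.2.2)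
    * prOf p (fun ω => (C ω, D ω)) (x.1, x.2.1)
    / (prOf p A x.2.2 * Qf p C D A x.1 x.2.1)

variable (p : Ω → ℝ) (A : Ω → α) (B : Ω → β) (C : Ω → γ) (D : Ω → δ)

lemma Qf_nonneg (hp : ∀ ω, 0 ≤ p ω) (c : γ) (d : δ) : 0 ≤ Qf p C D A c d :=
  Finset.sum_nonneg fun a _ =>
    div_nonneg (mul_nonneg (prOf_nonneg p hp _ _) (prOf_nonneg p hp _ _)) (prOf_nonneg p hp _ _)

lemma Qf_pos (hp : ∀ ω, 0 ≤ p ω) (c : γ) (d : δ)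
    (h : prOf p (fun ω => (C ω, D ω)) (c, d) ≠ 0) : 0 < Qf p C D A c d := by
  rw [marg3_3 p C D A c d] at h
  obtain ⟨a, -, ha⟩ := Finset.exists_ne_zero_of_sum_ne_zero h
  have h0 : 0 < prOf p (fun ω => (C ω, D ω, A ω)) (c, d, a) :=
    (prOf_nonneg p hp _ _).lt_of_ne (Ne.symm ha)
  have hCA := prOf3_le_13 p hp C D A c d a
  have hDA := prOf3_le_23 p hp C D A c d a
  have hA := prOf_pair_le_right p hp D A d a
  have hterm : 0 < prOf p (fun ω => (C ω, A ω)) (c, a)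
      * prOf p (fun ω => (D ω, A ω)) (d, a) / prOf p A a :=
    div_pos (mul_pos (lt_of_lt_of_le h0 hCA) (lt_of_lt_of_le h0 hDA))
      (lt_of_lt_of_le (lt_of_lt_of_le h0 hDA) hA)
  calc (0:ℝ) < _ := hterm
    _ ≤ Qf p C D A c d :=
      Finset.single_le_sum (f := fun t => prOf p (fun ω => (C ω, A ω)) (c, t)
          * prOf p (fun ω => (D ω, A ω)) (d, t) / prOf p A t)
        (fun i _ => div_nonneg (mul_nonneg (prOf_nonneg p hp _ _)
          (prOf_nonneg p hp _ _)) (prOf_nonneg p hp _ _)) (Finset.mem_univ a)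

lemma U1_nonneg (hp : ∀ ω, 0 ≤ p ω) (x : γ × δ × α) : 0 ≤ U1 p C D A x :=
  div_nonneg (mul_nonneg (mul_nonneg (prOf_nonneg p hp _ _) (prOf_nonneg p hp _ _))
    (prOf_nonneg p hp _ _)) (mul_nonneg (prOf_nonneg p hp _ _) (Qf_nonneg p A C D hp x.1 x.2.1))

lemma indep2 (hp : IsPMF p) (h1 : mi p A B = 0) (a : α) (b : β) :
    prOf p (fun ω => (A ω, B ω)) (a, b) = prOf p A a * prOf p B b := by
  have hp0 := hp.1
  refine gibbs_eq (fun x => prOf p (fun ω => (A ω, B ω)) x)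
    (fun x => prOf p A x.1 * prOf p B x.2)
    (fun x => prOf_nonneg p hp0 _ _)
    (fun x => mul_nonneg (prOf_nonneg p hp0 _ _) (prOf_nonneg p hp0 _ _))
    ?_ ?_ ?_ ?_ (a, b)
  · rintro ⟨a, b⟩ h
    have h0 : 0 < prOf p (fun ω => (A ω, B ω)) (a, b) := (prOf_nonneg p hp0 _ _).lt_of_ne (Ne.symm h)
    exact mul_pos (lt_of_lt_of_le h0 (prOf_pair_le_left p hp0 A B a b))
      (lt_of_lt_of_le h0 (prOf_pair_le_right p hp0 A B a b))
  · rw [sum_prOf, hp.2]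
  · have : ∑ x : α × β, prOf p A x.1 * prOf p B x.2
        = (∑ a, prOf p A a) * (∑ b, prOf p B b) := by
      rw [Finset.sum_mul_sum]
      exact Fintype.sum_prod_type _
    rw [this, sum_prOf, sum_prOf, hp.2, mul_one]
  · have hconv : ∑ x : α × β, prOf p (fun ω => (A ω, B ω)) x
        * Real.logb 2 (prOf p (fun ω => (A ω, B ω)) x / (prOf p A x.1 * prOf p B x.2))
        = ∑ ω, p ω * Real.logb 2 (prOf p (fun ω => (A ω, B ω)) (A ω, B ω)
            / (prOf p A (A ω) * prOf p B (B ω))) :=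
      group p (fun ω => (A ω, B ω))
        (fun x => Real.logb 2 (prOf p (fun ω => (A ω, B ω)) x / (prOf p A x.1 * prOf p B x.2)))
    have hsplit : ∑ ω, p ω * Real.logb 2 (prOf p (fun ω => (A ω, B ω)) (A ω, B ω)
            / (prOf p A (A ω) * prOf p B (B ω)))
        = ∑ ω, (p ω * Real.logb 2 (prOf p (fun ω => (A ω, B ω)) (A ω, B ω))
            - p ω * Real.logb 2 (prOf p A (A ω)) - p ω * Real.logb 2 (prOf p B (B ω))) := by
      refine Finset.sum_congr rfl fun ω _ => ?_
      rcases eq_or_ne (p ω) 0 with h | h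
      · simp [h]
      · have hpω : 0 < p ω := (hp0 ω).lt_of_ne (Ne.symm h)
        have hA : 0 < prOf p A (A ω) := lt_of_lt_of_le hpω (le_prOf p hp0 A ω)
        have hB : 0 < prOf p B (B ω) := lt_of_lt_of_le hpω (le_prOf p hp0 B ω)
        have hAB : 0 < prOf p (fun ω => (A ω, B ω)) (A ω, B ω) :=
          lt_of_lt_of_le hpω (le_prOf p hp0 (fun ω => (A ω, B ω)) ω)
        rw [Real.logb_div (ne_of_gt hAB) (ne_of_gt (mul_pos hA hB)),
          Real.logb_mul (ne_of_gt hA) (ne_of_gt hB)]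
        ring
    rw [hconv, hsplit]
    have : ∑ ω, (p ω * Real.logb 2 (prOf p (fun ω => (A ω, B ω)) (A ω, B ω))
            - p ω * Real.logb 2 (prOf p A (A ω)) - p ω * Real.logb 2 (prOf p B (B ω)))
        = mi p A B := by
      simp only [Finset.sum_sub_distrib]
      rw [mi, ent_omega, ent_omega, ent_omega]
      ring
    rw [this, h1]

lemma indep3 (hp : IsPMF p) (h2 : cmi p A B C = 0) (a : α) (b : β) (c : γ) :
    prOf p (fun ω => (A ω, B ω, C ω)) (a, b, c) * prOf p C c
      = prOf p (fun ω => (A ω, C ω)) (a, c) * prOf p (fun ω => (B ω, C ω)) (b, c) := by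
  have hp0 := hp.1
  have hACle : ∀ a c, prOf p (fun ω => (A ω, C ω)) (a, c) ≤ prOf p C c := fun a c =>
    prOf_pair_le_right p hp0 A C a c
  have hBCle : ∀ b c, prOf p (fun ω => (B ω, C ω)) (b, c) ≤ prOf p C c := fun b c =>
    prOf_pair_le_right p hp0 B C b c
  have heq := gibbs_eq (fun x => prOf p (fun ω => (A ω, B ω, C ω)) x)
    (fun x : α × β × γ => prOf p (fun ω => (A ω, C ω)) (x.1, x.2.2)
      * prOf p (fun ω => (B ω, C ω)) (x.2.1, x.2.2) / prOf p C x.2.2)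
    (fun x => prOf_nonneg p hp0 _ _)
    (fun x => div_nonneg (mul_nonneg (prOf_nonneg p hp0 _ _) (prOf_nonneg p hp0 _ _))
      (prOf_nonneg p hp0 _ _))
    ?_ ?_ ?_ ?_
  · rcases eq_or_ne (prOf p C c) 0 with h | h
    · have hAC : prOf p (fun ω => (A ω, C ω)) (a, c) = 0 :=
        le_antisymm (h ▸ hACle a c) (prOf_nonneg p hp0 _ _)
      have hABC : prOf p (fun ω => (A ω, B ω, C ω)) (a, b, c) = 0 := by
        refine le_antisymm ?_ (prOf_nonneg p hp0 _ _)
        rw [← hAC]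
        exact prOf3_le_13 p hp0 A B C a b c
      rw [h, hAC, hABC, mul_zero, zero_mul]
    · have := heq (a, b, c)
      simp only at this
      rw [this, div_mul_cancel₀ _ h]
  · rintro ⟨a, b, c⟩ hne
    have h0 : 0 < prOf p (fun ω => (A ω, B ω, C ω)) (a, b, c) :=
      (prOf_nonneg p hp0 _ _).lt_of_ne (Ne.symm hne)
    have hAC := prOf3_le_13 p hp0 A B C a b c
    have hBC := prOf3_le_23 p hp0 A B C a b c
    exact div_pos (mul_pos (lt_of_lt_of_le h0 hAC) (lt_of_lt_of_le h0 hBC))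
      (lt_of_lt_of_le (lt_of_lt_of_le h0 hBC) (hBCle b c))
  · rw [sum_prOf, hp.2]
  · calc ∑ x : α × β × γ, prOf p (fun ω => (A ω, C ω)) (x.1, x.2.2)
        * prOf p (fun ω => (B ω, C ω)) (x.2.1, x.2.2) / prOf p C x.2.2
        = ∑ a, ∑ b, ∑ c, prOf p (fun ω => (A ω, C ω)) (a, c)
            * prOf p (fun ω => (B ω, C ω)) (b, c) / prOf p C c := by
          simp only [Fintype.sum_prod_type]
      _ = ∑ a, ∑ c, ∑ b, prOf p (fun ω => (A ω, C ω)) (a, c)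
            * prOf p (fun ω => (B ω, C ω)) (b, c) / prOf p C c :=
          Finset.sum_congr rfl fun a _ => Finset.sum_comm
      _ = ∑ c, ∑ a, ∑ b, prOf p (fun ω => (A ω, C ω)) (a, c)
            * prOf p (fun ω => (B ω, C ω)) (b, c) / prOf p C c := Finset.sum_comm
      _ = ∑ c, prOf p C c * (prOf p C c / prOf p C c) := by
          refine Finset.sum_congr rfl fun c _ => ?_
          calc ∑ a, ∑ b, prOf p (fun ω => (A ω, C ω)) (a, c)
              * prOf p (fun ω => (B ω, C ω)) (b, c) / prOf p C c
              = ∑ a, prOf p (fun ω => (A ω, C ω)) (a, c) * (prOf p C c / prOf p C c) := by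
                refine Finset.sum_congr rfl fun a _ => ?_
                rw [← Finset.sum_div, ← Finset.mul_sum, ← marg2_1 p B C c, mul_div_assoc]
            _ = (∑ a, prOf p (fun ω => (A ω, C ω)) (a, c)) * (prOf p C c / prOf p C c) :=
                (Finset.sum_mul _ _ _).symm
            _ = prOf p C c * (prOf p C c / prOf p C c) := by rw [← marg2_1 p A C c]
      _ ≤ ∑ c, prOf p C c := Finset.sum_le_sum fun c _ =>
          mul_le_of_le_one_right (prOf_nonneg p hp0 _ _) (div_self_le_one _)
      _ = 1 := by rw [sum_prOf, hp.2]
  · have hconv : ∑ x : α × β × γ, prOf p (fun ω => (A ω, B ω, C ω)) x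
        * Real.logb 2 (prOf p (fun ω => (A ω, B ω, C ω)) x
          / (prOf p (fun ω => (A ω, C ω)) (x.1, x.2.2)
            * prOf p (fun ω => (B ω, C ω)) (x.2.1, x.2.2) / prOf p C x.2.2))
        = ∑ ω, p ω * Real.logb 2 (prOf p (fun ω => (A ω, B ω, C ω)) (A ω, B ω, C ω)
          / (prOf p (fun ω => (A ω, C ω)) (A ω, C ω)
            * prOf p (fun ω => (B ω, C ω)) (B ω, C ω) / prOf p C (C ω))) :=
      group p (fun ω => (A ω, B ω, C ω)) (fun x => Real.logb 2
        (prOf p (fun ω => (A ω, B ω, C ω)) x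
          / (prOf p (fun ω => (A ω, C ω)) (x.1, x.2.2)
            * prOf p (fun ω => (B ω, C ω)) (x.2.1, x.2.2) / prOf p C x.2.2)))
    have hsplit : ∑ ω, p ω * Real.logb 2 (prOf p (fun ω => (A ω, B ω, C ω)) (A ω, B ω, C ω)
          / (prOf p (fun ω => (A ω, C ω)) (A ω, C ω)
            * prOf p (fun ω => (B ω, C ω)) (B ω, C ω) / prOf p C (C ω)))
        = ∑ ω, (p ω * Real.logb 2 (prOf p (fun ω => (A ω, B ω, C ω)) (A ω, B ω, C ω))
            + p ω * Real.logb 2 (prOf p C (C ω))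
            - p ω * Real.logb 2 (prOf p (fun ω => (A ω, C ω)) (A ω, C ω))
            - p ω * Real.logb 2 (prOf p (fun ω => (B ω, C ω)) (B ω, C ω))) := by
      refine Finset.sum_congr rfl fun ω _ => ?_
      rcases eq_or_ne (p ω) 0 with h | h
      · simp [h]
      · have hpω : 0 < p ω := (hp0 ω).lt_of_ne (Ne.symm h)
        have hC : 0 < prOf p C (C ω) := lt_of_lt_of_le hpω (le_prOf p hp0 C ω)
        have hAC : 0 < prOf p (fun ω => (A ω, C ω)) (A ω, C ω) :=
          lt_of_lt_of_le hpω (le_prOf p hp0 (fun ω => (A ω, C ω)) ω)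
        have hBC : 0 < prOf p (fun ω => (B ω, C ω)) (B ω, C ω) :=
          lt_of_lt_of_le hpω (le_prOf p hp0 (fun ω => (B ω, C ω)) ω)
        have hABC : 0 < prOf p (fun ω => (A ω, B ω, C ω)) (A ω, B ω, C ω) :=
          lt_of_lt_of_le hpω (le_prOf p hp0 (fun ω => (A ω, B ω, C ω)) ω)
        rw [div_div_eq_mul_div, Real.logb_div (by positivity) (by positivity),
          Real.logb_mul (ne_of_gt hABC) (ne_of_gt hC),
          Real.logb_mul (ne_of_gt hAC) (ne_of_gt hBC)]
        ring
    rw [hconv, hsplit]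
    have : ∑ ω, (p ω * Real.logb 2 (prOf p (fun ω => (A ω, B ω, C ω)) (A ω, B ω, C ω))
            + p ω * Real.logb 2 (prOf p C (C ω))
            - p ω * Real.logb 2 (prOf p (fun ω => (A ω, C ω)) (A ω, C ω))
            - p ω * Real.logb 2 (prOf p (fun ω => (B ω, C ω)) (B ω, C ω)))
        = cmi p A B C := by
      simp only [Finset.sum_sub_distrib, Finset.sum_add_distrib]
      rw [cmi, ent_omega, ent_omega, ent_omega, ent_omega]
      ring
    rw [this, h2]

lemma key1 (hp : IsPMF p) (h1 : mi p A B = 0) (h2 : cmi p A B C = 0) (a : α) (b : β) :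
    ∑ c, prOf p (fun ω => (A ω, C ω)) (a, c) * prOf p (fun ω => (B ω, C ω)) (b, c) / prOf p C c
      = prOf p A a * prOf p B b := by
  have hp0 := hp.1
  calc ∑ c, prOf p (fun ω => (A ω, C ω)) (a, c) * prOf p (fun ω => (B ω, C ω)) (b, c) / prOf p C c
      = ∑ c, prOf p (fun ω => (A ω, B ω, C ω)) (a, b, c) := by
        refine Finset.sum_congr rfl fun c _ => ?_
        rcases eq_or_ne (prOf p C c) 0 with h | h
        · have hAC : prOf p (fun ω => (A ω, C ω)) (a, c) = 0 :=
            le_antisymm (h ▸ prOf_pair_le_right p hp0 A C a c) (prOf_nonneg p hp0 _ _)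
          have hABC : prOf p (fun ω => (A ω, B ω, C ω)) (a, b, c) = 0 :=
            le_antisymm (hAC ▸ prOf3_le_13 p hp0 A B C a b c) (prOf_nonneg p hp0 _ _)
          rw [hAC, hABC, zero_mul, zero_div]
        · rw [← indep3 p A B C hp h2 a b c, mul_div_cancel_right₀ _ h]
    _ = prOf p (fun ω => (A ω, B ω)) (a, b) := (marg3_3 p A B C a b).symm
    _ = prOf p A a * prOf p B b := indep2 p A B hp h1 a b

lemma T_le (hp : IsPMF p) :
    ∑ x : γ × δ × α, prOf p (fun ω => (C ω, D ω, A ω)) x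
      * Real.logb 2 (U1 p C D A x / prOf p (fun ω => (C ω, D ω, A ω)) x) ≤ 0 := by
  have hp0 := hp.1
  refine gibbs_le _ _ (fun x => prOf_nonneg p hp0 _ _) (fun x => U1_nonneg p A C D hp0 x) ?_ ?_
  · rintro ⟨c, d, a⟩ h
    have h0 : 0 < prOf p (fun ω => (C ω, D ω, A ω)) (c, d, a) :=
      (prOf_nonneg p hp0 _ _).lt_of_ne (Ne.symm h)
    have hCA := prOf3_le_13 p hp0 C D A c d a
    have hDA := prOf3_le_23 p hp0 C D A c d a
    have hCD := prOf3_le_12 p hp0 C D A c d a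
    have hA := prOf_pair_le_right p hp0 D A d a
    have hQ := Qf_pos p A C D hp0 c d (ne_of_gt (lt_of_lt_of_le h0 hCD))
    exact div_pos (mul_pos (mul_pos (lt_of_lt_of_le h0 hCA) (lt_of_lt_of_le h0 hDA))
      (lt_of_lt_of_le h0 hCD))
      (mul_pos (lt_of_lt_of_le (lt_of_lt_of_le h0 hDA) hA) hQ)
  · have h1sum : ∑ x : γ × δ × α, prOf p (fun ω => (C ω, D ω, A ω)) x = 1 := by
      rw [sum_prOf, hp.2]
    rw [h1sum]
    calc ∑ x : γ × δ × α, U1 p C D A x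
        = ∑ c, ∑ d, ∑ a, U1 p C D A (c, d, a) := by
          simp only [Fintype.sum_prod_type]
      _ ≤ ∑ c, ∑ d, prOf p (fun ω => (C ω, D ω)) (c, d) := by
          refine Finset.sum_le_sum fun c _ => Finset.sum_le_sum fun d _ => ?_
          calc ∑ a, U1 p C D A (c, d, a)
              = ∑ a, (prOf p (fun ω => (C ω, A ω)) (c, a)
                  * prOf p (fun ω => (D ω, A ω)) (d, a) / prOf p A a)
                  * (prOf p (fun ω => (C ω, D ω)) (c, d) / Qf p C D A c d) := by
                refine Finset.sum_congr rfl fun a _ => ?_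
                simp only [U1]
                exact (div_mul_div_comm _ _ _ _).symm
            _ = Qf p C D A c d * (prOf p (fun ω => (C ω, D ω)) (c, d) / Qf p C D A c d) := by
                rw [← Finset.sum_mul]
                rfl
            _ = prOf p (fun ω => (C ω, D ω)) (c, d) * (Qf p C D A c d / Qf p C D A c d) := by
                ring
            _ ≤ prOf p (fun ω => (C ω, D ω)) (c, d) :=
                mul_le_of_le_one_right (prOf_nonneg p hp0 _ _) (div_self_le_one _)
      _ = ∑ x : γ × δ, prOf p (fun ω => (C ω, D ω)) x := (Fintype.sum_prod_type _).symm
      _ = 1 := by rw [sum_prOf, hp.2]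

lemma T3_le (hp : IsPMF p) (h1 : mi p A B = 0) (h2 : cmi p A B C = 0) :
    ∑ x : γ × δ, prOf p (fun ω => (C ω, D ω)) x
      * Real.logb 2 (Qf p C D A x.1 x.2 * Qf p C D B x.1 x.2
          / (prOf p C x.1 * prOf p D x.2) / prOf p (fun ω => (C ω, D ω)) x) ≤ 0 := by
  have hp0 := hp.1
  refine gibbs_le _ _ (fun x => prOf_nonneg p hp0 _ _)
    (fun x => div_nonneg (mul_nonneg (Qf_nonneg p A C D hp0 _ _) (Qf_nonneg p B C D hp0 _ _))
      (mul_nonneg (prOf_nonneg p hp0 _ _) (prOf_nonneg p hp0 _ _))) ?_ ?_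
  · rintro ⟨c, d⟩ h
    have h0 : 0 < prOf p (fun ω => (C ω, D ω)) (c, d) :=
      (prOf_nonneg p hp0 _ _).lt_of_ne (Ne.symm h)
    exact div_pos (mul_pos (Qf_pos p A C D hp0 c d h) (Qf_pos p B C D hp0 c d h))
      (mul_pos (lt_of_lt_of_le h0 (prOf_pair_le_left p hp0 C D c d))
        (lt_of_lt_of_le h0 (prOf_pair_le_right p hp0 C D c d)))
  · have h1sum : ∑ x : γ × δ, prOf p (fun ω => (C ω, D ω)) x = 1 := by
      rw [sum_prOf, hp.2]
    rw [h1sum]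
    calc ∑ x : γ × δ, Qf p C D A x.1 x.2 * Qf p C D B x.1 x.2
          / (prOf p C x.1 * prOf p D x.2)
        = ∑ c, ∑ d, Qf p C D A c d * Qf p C D B c d / (prOf p C c * prOf p D d) := by
          simp only [Fintype.sum_prod_type]
      _ = ∑ c, ∑ d, ∑ a, ∑ b,
            (prOf p (fun ω => (C ω, A ω)) (c, a) * prOf p (fun ω => (C ω, B ω)) (c, b)
              / prOf p C c)
            * ((prOf p (fun ω => (D ω, A ω)) (d, a) * prOf p (fun ω => (D ω, B ω)) (d, b)
              / prOf p D d) * (prOf p A a * prOf p B b)⁻¹) := by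
          refine Finset.sum_congr rfl fun c _ => Finset.sum_congr rfl fun d _ => ?_
          simp only [Qf]
          rw [Finset.sum_mul_sum, Finset.sum_div]
          refine Finset.sum_congr rfl fun a _ => ?_
          rw [Finset.sum_div]
          refine Finset.sum_congr rfl fun b _ => ?_
          ring
      _ = ∑ a, ∑ b, ∑ c, ∑ d,
            (prOf p (fun ω => (C ω, A ω)) (c, a) * prOf p (fun ω => (C ω, B ω)) (c, b)
              / prOf p C c)
            * ((prOf p (fun ω => (D ω, A ω)) (d, a) * prOf p (fun ω => (D ω, B ω)) (d, b)
              / prOf p D d) * (prOf p A a * prOf p B b)⁻¹) :=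
          sum4_reorder fun c d a b =>
            (prOf p (fun ω => (C ω, A ω)) (c, a) * prOf p (fun ω => (C ω, B ω)) (c, b)
              / prOf p C c)
            * ((prOf p (fun ω => (D ω, A ω)) (d, a) * prOf p (fun ω => (D ω, B ω)) (d, b)
              / prOf p D d) * (prOf p A a * prOf p B b)⁻¹)
      _ = ∑ a, ∑ b, (prOf p A a * prOf p B b)
            * ((∑ d, prOf p (fun ω => (D ω, A ω)) (d, a) * prOf p (fun ω => (D ω, B ω)) (d, b)
              / prOf p D d) * (prOf p A a * prOf p B b)⁻¹) := by
          refine Finset.sum_congr rfl fun a _ => Finset.sum_congr rfl fun b _ => ?_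
          rw [show ∀ M : ℝ, (∑ c, ∑ d,
              (prOf p (fun ω => (C ω, A ω)) (c, a) * prOf p (fun ω => (C ω, B ω)) (c, b)
                / prOf p C c)
              * ((prOf p (fun ω => (D ω, A ω)) (d, a) * prOf p (fun ω => (D ω, B ω)) (d, b)
                / prOf p D d) * M))
              = (∑ c, prOf p (fun ω => (C ω, A ω)) (c, a) * prOf p (fun ω => (C ω, B ω)) (c, b)
                / prOf p C c)
              * ((∑ d, prOf p (fun ω => (D ω, A ω)) (d, a) * prOf p (fun ω => (D ω, B ω)) (d, b)
                / prOf p D d) * M) from fun M => ?_]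
          · rw [show (∑ c, prOf p (fun ω => (C ω, A ω)) (c, a)
                * prOf p (fun ω => (C ω, B ω)) (c, b) / prOf p C c)
                = prOf p A a * prOf p B b from ?_]
            rw [← key1 p A B C hp h1 h2 a b]
            refine Finset.sum_congr rfl fun c _ => ?_
            rw [prOf_swap p A C a c, prOf_swap p B C b c]
          · rw [Finset.sum_mul]
            refine Finset.sum_congr rfl fun c _ => ?_
            rw [← Finset.mul_sum, ← Finset.sum_mul]
      _ ≤ ∑ a, ∑ b, ∑ d, prOf p (fun ω => (D ω, A ω)) (d, a)
            * prOf p (fun ω => (D ω, B ω)) (d, b) / prOf p D d := by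
          refine Finset.sum_le_sum fun a _ => Finset.sum_le_sum fun b _ => ?_
          have hK : 0 ≤ ∑ d, prOf p (fun ω => (D ω, A ω)) (d, a)
              * prOf p (fun ω => (D ω, B ω)) (d, b) / prOf p D d :=
            Finset.sum_nonneg fun d _ => div_nonneg
              (mul_nonneg (prOf_nonneg p hp0 _ _) (prOf_nonneg p hp0 _ _))
              (prOf_nonneg p hp0 _ _)
          have hx1 : (prOf p A a * prOf p B b) * (prOf p A a * prOf p B b)⁻¹ ≤ 1 := by
            rcases eq_or_ne (prOf p A a * prOf p B b) 0 with h | h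
            · rw [h, zero_mul]; norm_num
            · rw [mul_inv_cancel₀ h]
          calc (prOf p A a * prOf p B b)
              * ((∑ d, prOf p (fun ω => (D ω, A ω)) (d, a)
                  * prOf p (fun ω => (D ω, B ω)) (d, b) / prOf p D d)
                * (prOf p A a * prOf p B b)⁻¹)
              = (∑ d, prOf p (fun ω => (D ω, A ω)) (d, a)
                  * prOf p (fun ω => (D ω, B ω)) (d, b) / prOf p D d)
                * ((prOf p A a * prOf p B b) * (prOf p A a * prOf p B b)⁻¹) := by ring
            _ ≤ _ := by simpa using mul_le_of_le_one_right hK hx1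
      _ = ∑ d, ∑ a, ∑ b, prOf p (fun ω => (D ω, A ω)) (d, a)
            * prOf p (fun ω => (D ω, B ω)) (d, b) / prOf p D d :=
          sum3_reorder fun a b d => prOf p (fun ω => (D ω, A ω)) (d, a)
            * prOf p (fun ω => (D ω, B ω)) (d, b) / prOf p D d
      _ = ∑ d, prOf p D d * (prOf p D d / prOf p D d) := by
          refine Finset.sum_congr rfl fun d _ => ?_
          calc ∑ a, ∑ b, prOf p (fun ω => (D ω, A ω)) (d, a)
              * prOf p (fun ω => (D ω, B ω)) (d, b) / prOf p D d
              = ∑ a, prOf p (fun ω => (D ω, A ω)) (d, a) * (prOf p D d / prOf p D d) := by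
                refine Finset.sum_congr rfl fun a _ => ?_
                rw [← Finset.sum_div, ← Finset.mul_sum, ← marg2_2 p D B d, mul_div_assoc]
            _ = (∑ a, prOf p (fun ω => (D ω, A ω)) (d, a)) * (prOf p D d / prOf p D d) :=
                (Finset.sum_mul _ _ _).symm
            _ = prOf p D d * (prOf p D d / prOf p D d) := by rw [← marg2_2 p D A d]
      _ ≤ ∑ d, prOf p D d := Finset.sum_le_sum fun d _ =>
          mul_le_of_le_one_right (prOf_nonneg p hp0 _ _) (div_self_le_one _)
      _ = 1 := by rw [sum_prOf, hp.2]

end main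

end ZYaux

theorem zhang_yeung_conditional {Ω α β γ δ : Type*} [Fintype Ω] [Fintype α] [Fintype β] [Fintype γ] [Fintype δ]
    [DecidableEq α] [DecidableEq β] [DecidableEq γ] [DecidableEq δ]
    (p : Ω → ℝ) (hp : IsPMF p)
    (A : Ω → α) (B : Ω → β) (C : Ω → γ) (D : Ω → δ)
    (h1 : mi p A B = 0) (h2 : cmi p A B C = 0) :
    mi p C D ≤ cmi p C D A + cmi p C D B := by
  have hp0 := hp.1
  have hT1 := ZYaux.T_le p A C D hp
  have hT2 := ZYaux.T_le p B C D hp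
  have hT3 := ZYaux.T3_le p A B C D hp h1 h2
  rw [ZYaux.group p (fun ω => (C ω, D ω, A ω)) (fun x => Real.logb 2
    (ZYaux.U1 p C D A x / prOf p (fun ω => (C ω, D ω, A ω)) x))] at hT1
  rw [ZYaux.group p (fun ω => (C ω, D ω, B ω)) (fun x => Real.logb 2
    (ZYaux.U1 p C D B x / prOf p (fun ω => (C ω, D ω, B ω)) x))] at hT2
  rw [ZYaux.group p (fun ω => (C ω, D ω)) (fun x => Real.logb 2
    (ZYaux.Qf p C D A x.1 x.2 * ZYaux.Qf p C D B x.1 x.2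
      / (prOf p C x.1 * prOf p D x.2) / prOf p (fun ω => (C ω, D ω)) x))] at hT3
  have key : (∑ ω, p ω * Real.logb 2 (ZYaux.U1 p C D A (C ω, D ω, A ω)
        / prOf p (fun ω => (C ω, D ω, A ω)) (C ω, D ω, A ω)))
      + (∑ ω, p ω * Real.logb 2 (ZYaux.U1 p C D B (C ω, D ω, B ω)
        / prOf p (fun ω => (C ω, D ω, B ω)) (C ω, D ω, B ω)))
      + (∑ ω, p ω * Real.logb 2 (ZYaux.Qf p C D A (C ω) (D ω) * ZYaux.Qf p C D B (C ω) (D ω)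
        / (prOf p C (C ω) * prOf p D (D ω)) / prOf p (fun ω => (C ω, D ω)) (C ω, D ω)))
      = mi p C D - cmi p C D A - cmi p C D B := by
    rw [← Finset.sum_add_distrib, ← Finset.sum_add_distrib]
    have point : ∀ ω, p ω * Real.logb 2 (ZYaux.U1 p C D A (C ω, D ω, A ω)
          / prOf p (fun ω => (C ω, D ω, A ω)) (C ω, D ω, A ω))
        + p ω * Real.logb 2 (ZYaux.U1 p C D B (C ω, D ω, B ω)
          / prOf p (fun ω => (C ω, D ω, B ω)) (C ω, D ω, B ω))
        + p ω * Real.logb 2 (ZYaux.Qf p C D A (C ω) (D ω) * ZYaux.Qf p C D B (C ω) (D ω)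
          / (prOf p C (C ω) * prOf p D (D ω)) / prOf p (fun ω => (C ω, D ω)) (C ω, D ω))
        = (p ω * Real.logb 2 (prOf p (fun ω => (C ω, A ω)) (C ω, A ω))
            + p ω * Real.logb 2 (prOf p (fun ω => (D ω, A ω)) (D ω, A ω))
            - p ω * Real.logb 2 (prOf p (fun ω => (C ω, D ω, A ω)) (C ω, D ω, A ω))
            - p ω * Real.logb 2 (prOf p A (A ω)))
          + (p ω * Real.logb 2 (prOf p (fun ω => (C ω, B ω)) (C ω, B ω))
            + p ω * Real.logb 2 (prOf p (fun ω => (D ω, B ω)) (D ω, B ω))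
            - p ω * Real.logb 2 (prOf p (fun ω => (C ω, D ω, B ω)) (C ω, D ω, B ω))
            - p ω * Real.logb 2 (prOf p B (B ω)))
          + (p ω * Real.logb 2 (prOf p (fun ω => (C ω, D ω)) (C ω, D ω))
            - p ω * Real.logb 2 (prOf p C (C ω))
            - p ω * Real.logb 2 (prOf p D (D ω))) := by
      intro ω
      rcases eq_or_ne (p ω) 0 with h | h
      · simp [h]
      · have hpω : 0 < p ω := (hp0 ω).lt_of_ne (Ne.symm h)
        have hPA : 0 < prOf p A (A ω) := lt_of_lt_of_le hpω (ZYaux.le_prOf p hp0 A ω)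
        have hPB : 0 < prOf p B (B ω) := lt_of_lt_of_le hpω (ZYaux.le_prOf p hp0 B ω)
        have hPC : 0 < prOf p C (C ω) := lt_of_lt_of_le hpω (ZYaux.le_prOf p hp0 C ω)
        have hPD : 0 < prOf p D (D ω) := lt_of_lt_of_le hpω (ZYaux.le_prOf p hp0 D ω)
        have hPCD : 0 < prOf p (fun ω => (C ω, D ω)) (C ω, D ω) :=
          lt_of_lt_of_le hpω (ZYaux.le_prOf p hp0 (fun ω => (C ω, D ω)) ω)
        have hPCA : 0 < prOf p (fun ω => (C ω, A ω)) (C ω, A ω) :=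
          lt_of_lt_of_le hpω (ZYaux.le_prOf p hp0 (fun ω => (C ω, A ω)) ω)
        have hPDA : 0 < prOf p (fun ω => (D ω, A ω)) (D ω, A ω) :=
          lt_of_lt_of_le hpω (ZYaux.le_prOf p hp0 (fun ω => (D ω, A ω)) ω)
        have hPCB : 0 < prOf p (fun ω => (C ω, B ω)) (C ω, B ω) :=
          lt_of_lt_of_le hpω (ZYaux.le_prOf p hp0 (fun ω => (C ω, B ω)) ω)
        have hPDB : 0 < prOf p (fun ω => (D ω, B ω)) (D ω, B ω) :=
          lt_of_lt_of_le hpω (ZYaux.le_prOf p hp0 (fun ω => (D ω, B ω)) ω)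
        have hPCDA : 0 < prOf p (fun ω => (C ω, D ω, A ω)) (C ω, D ω, A ω) :=
          lt_of_lt_of_le hpω (ZYaux.le_prOf p hp0 (fun ω => (C ω, D ω, A ω)) ω)
        have hPCDB : 0 < prOf p (fun ω => (C ω, D ω, B ω)) (C ω, D ω, B ω) :=
          lt_of_lt_of_le hpω (ZYaux.le_prOf p hp0 (fun ω => (C ω, D ω, B ω)) ω)
        have hQA : 0 < ZYaux.Qf p C D A (C ω) (D ω) :=
          ZYaux.Qf_pos p A C D hp0 (C ω) (D ω) (ne_of_gt hPCD)
        have hQB : 0 < ZYaux.Qf p C D B (C ω) (D ω) :=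
          ZYaux.Qf_pos p B C D hp0 (C ω) (D ω) (ne_of_gt hPCD)
        have eU1 : ZYaux.U1 p C D A (C ω, D ω, A ω)
              / prOf p (fun ω => (C ω, D ω, A ω)) (C ω, D ω, A ω)
            = prOf p (fun ω => (C ω, A ω)) (C ω, A ω)
              * prOf p (fun ω => (D ω, A ω)) (D ω, A ω)
              * prOf p (fun ω => (C ω, D ω)) (C ω, D ω)
              / (prOf p A (A ω) * ZYaux.Qf p C D A (C ω) (D ω)
                * prOf p (fun ω => (C ω, D ω, A ω)) (C ω, D ω, A ω)) := by
          simp only [ZYaux.U1]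
          rw [div_div]
        have eU2 : ZYaux.U1 p C D B (C ω, D ω, B ω)
              / prOf p (fun ω => (C ω, D ω, B ω)) (C ω, D ω, B ω)
            = prOf p (fun ω => (C ω, B ω)) (C ω, B ω)
              * prOf p (fun ω => (D ω, B ω)) (D ω, B ω)
              * prOf p (fun ω => (C ω, D ω)) (C ω, D ω)
              / (prOf p B (B ω) * ZYaux.Qf p C D B (C ω) (D ω)
                * prOf p (fun ω => (C ω, D ω, B ω)) (C ω, D ω, B ω)) := by
          simp only [ZYaux.U1]
          rw [div_div]
        have eU3 : ZYaux.Qf p C D A (C ω) (D ω) * ZYaux.Qf p C D B (C ω) (D ω)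
              / (prOf p C (C ω) * prOf p D (D ω)) / prOf p (fun ω => (C ω, D ω)) (C ω, D ω)
            = ZYaux.Qf p C D A (C ω) (D ω) * ZYaux.Qf p C D B (C ω) (D ω)
              / (prOf p C (C ω) * prOf p D (D ω)
                * prOf p (fun ω => (C ω, D ω)) (C ω, D ω)) := by
          rw [div_div]
        rw [eU1, eU2, eU3]
        rw [Real.logb_div (by positivity) (by positivity),
          Real.logb_div (by positivity) (by positivity),
          Real.logb_div (by positivity) (by positivity),
          Real.logb_mul (by positivity) (by positivity),
          Real.logb_mul (by positivity) (by positivity),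
          Real.logb_mul (by positivity) (by positivity),
          Real.logb_mul (by positivity) (by positivity),
          Real.logb_mul (by positivity) (by positivity),
          Real.logb_mul (by positivity) (by positivity),
          Real.logb_mul (by positivity) (by positivity),
          Real.logb_mul (by positivity) (by positivity),
          Real.logb_mul (by positivity) (by positivity),
          Real.logb_mul (by positivity) (by positivity),
          Real.logb_mul (by positivity) (by positivity)]
        ring
    rw [Finset.sum_congr rfl fun ω _ => point ω]
    simp only [Finset.sum_add_distrib, Finset.sum_sub_distrib]
    rw [mi, cmi, cmi]
    simp only [ZYaux.ent_omega]
    ring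
  linarith [hT1, hT2, hT3, key]

end
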